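/- Let Y be an uncountable Hausdorff quasi-Polish space. Then the Cantor space 2^ω embeds topologically into Y (i.e., there is a map 2^ω → Y that is a homeomorphism onto its image). -/

import Mathlib

/-! The symmetrised quasi-metric `max (d x y) (d y x)` is complete, and the forward balls
`{y | d x y < ε}` form a neighbourhood basis. A Cantor scheme of closed forward balls, nested and
with radii halving at each level, whose centres are taken in the perfect kernel of `Y`, therefore
has a limit point along every branch; the limit depends continuously on the branch, and the
Hausdorff property lets the two children of each node be chosen disjoint, which makes it injective.
Compactness of `ℕ → Bool` turns this continuous injection into an embedding. -/

/-- `d` is a complete quasi-metric on `X` compatible with its topology. -/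
def IsCompleteQuasiMetric {X : Type*} [t : TopologicalSpace X] (d : X → X → ℝ) : Prop :=
  (∀ x y : X, 0 ≤ d x y) ∧
  (∀ x y : X, (d x y = 0 ∧ d y x = 0) ↔ x = y) ∧
  (∀ x y z : X, d x z ≤ d x y + d y z) ∧
  (t = TopologicalSpace.generateFrom
    {B : Set X | ∃ (x : X) (ε : ℝ), 0 < ε ∧ B = {y : X | d x y < ε}}) ∧
  (∀ u : ℕ → X,
    (∀ ε : ℝ, 0 < ε → ∃ N : ℕ, ∀ m n : ℕ, N ≤ m → m ≤ n → d (u m) (u n) < ε) →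
    ∃ x : X, ∀ ε : ℝ, 0 < ε → ∃ N : ℕ, ∀ n : ℕ, N ≤ n →
      max (d x (u n)) (d (u n) x) < ε)

/-- A quasi-Polish space: a countably based T₀ space admitting a compatible complete
quasi-metric. -/
def IsQuasiPolish (X : Type*) [TopologicalSpace X] : Prop :=
  SecondCountableTopology X ∧ T0Space X ∧ ∃ d : X → X → ℝ, IsCompleteQuasiMetric d

open Set Filter Topology Function PiNat

def branch {P : Type*} (child : P → Bool → P) (root : P) (σ : ℕ → Bool) : ℕ → P
  | 0 => root
  | n + 1 => child (branch child root σ n) (σ n)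

theorem branch_eq_of_mem_cylinder {P : Type*} (child : P → Bool → P) (root : P)
    {σ τ : ℕ → Bool} {n : ℕ} (h : τ ∈ cylinder σ n) :
    branch child root τ n = branch child root σ n := by
  induction n with
  | zero => rfl
  | succ n ih =>
    rw [branch, branch, ih (cylinder_anti σ n.le_succ h), h n n.lt_succ_self]

namespace IsCompleteQuasiMetric

variable {Y : Type*} [TopologicalSpace Y] {d : Y → Y → ℝ}

theorem nonneg (hd : IsCompleteQuasiMetric d) (x y : Y) : 0 ≤ d x y :=
  hd.1 x y

theorem triangle (hd : IsCompleteQuasiMetric d) (x y z : Y) : d x z ≤ d x y + d y z :=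
  hd.2.2.1 x y z

theorem eq_generateFrom (hd : IsCompleteQuasiMetric d) :
    ‹TopologicalSpace Y› = TopologicalSpace.generateFrom
      {B : Set Y | ∃ (x : Y) (ε : ℝ), 0 < ε ∧ B = {y : Y | d x y < ε}} :=
  hd.2.2.2.1

theorem dist_self (hd : IsCompleteQuasiMetric d) (x : Y) : d x x = 0 :=
  ((hd.2.1 x x).2 rfl).1

theorem isOpen_ball (hd : IsCompleteQuasiMetric d) (x : Y) {ε : ℝ} (hε : 0 < ε) :
    IsOpen {y | d x y < ε} := by
  rw [hd.eq_generateFrom]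
  exact .basic _ ⟨x, ε, hε, rfl⟩

theorem exists_ball_subset_of_isOpen (hd : IsCompleteQuasiMetric d) {U : Set Y} (hU : IsOpen U)
    {x : Y} (hx : x ∈ U) : ∃ ε > 0, {y | d x y < ε} ⊆ U := by
  rw [hd.eq_generateFrom] at hU
  induction hU generalizing x with
  | basic B hB =>
    obtain ⟨z, ε, -, rfl⟩ := hB
    refine ⟨ε - d z x, sub_pos.2 hx, fun y hy => ?_⟩
    have hy : d x y < ε - d z x := hy
    exact show d z y < ε by linarith [hd.triangle z x y]
  | univ => exact ⟨1, one_pos, subset_univ _⟩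
  | inter U V _ _ ihU ihV =>
    obtain ⟨ε₁, hε₁, hU⟩ := ihU hx.1
    obtain ⟨ε₂, hε₂, hV⟩ := ihV hx.2
    exact ⟨min ε₁ ε₂, lt_min hε₁ hε₂, fun y (hy : d x y < _) =>
      ⟨hU (lt_min_iff.1 hy).1, hV (lt_min_iff.1 hy).2⟩⟩
  | sUnion T _ ih =>
    obtain ⟨U, hUT, hxU⟩ := hx
    obtain ⟨ε, hε, hU⟩ := ih U hUT hxU
    exact ⟨ε, hε, hU.trans (subset_sUnion_of_mem hUT)⟩

theorem nhds_basis_ball (hd : IsCompleteQuasiMetric d) (x : Y) :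
    (𝓝 x).HasBasis (0 < ·) fun ε => {y | d x y < ε} := by
  refine ⟨fun U => ⟨fun hU => ?_, fun ⟨ε, hε, h⟩ => ?_⟩⟩
  · obtain ⟨V, hVU, hV, hxV⟩ := mem_nhds_iff.1 hU
    obtain ⟨ε, hε, h⟩ := hd.exists_ball_subset_of_isOpen hV hxV
    exact ⟨ε, hε, h.trans hVU⟩
  · refine mem_of_superset ((hd.isOpen_ball x hε).mem_nhds ?_) h
    simpa [hd.dist_self] using hε

theorem exists_disjoint_closedBall [T2Space Y] (hd : IsCompleteQuasiMetric d) {a b : Y}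
    (hab : a ≠ b) : ∃ s > 0, Disjoint {y | d a y ≤ s} {y | d b y ≤ s} := by
  obtain ⟨ε₁, hε₁, ε₂, hε₂, h⟩ :=
    ((hd.nhds_basis_ball a).disjoint_iff (hd.nhds_basis_ball b)).1 (disjoint_nhds_nhds.2 hab)
  refine ⟨min ε₁ ε₂ / 2, by positivity, h.mono (fun y (hy : d a y ≤ _) => ?_)
    (fun y (hy : d b y ≤ _) => ?_)⟩
  · exact show d a y < ε₁ by linarith [min_le_left ε₁ ε₂]
  · exact show d b y < ε₂ by linarith [min_le_right ε₁ ε₂]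

theorem dist_add_le_of_nested (hd : IsCompleteQuasiMetric d) {u : ℕ → Y} {r : ℕ → ℝ}
    (hu : ∀ n, d (u n) (u (n + 1)) + r (n + 1) ≤ r n) {m n : ℕ} (hmn : m ≤ n) :
    d (u m) (u n) + r n ≤ r m := by
  induction n, hmn using Nat.le_induction with
  | base => simp [hd.dist_self]
  | succ n _ ih => linarith [hd.triangle (u m) (u n) (u (n + 1)), hu n]

/-- By the triangle inequality, `hu` makes the closed forward balls `{y | d (u n) y ≤ r n}`
nested. -/
theorem exists_limit_of_nested (hd : IsCompleteQuasiMetric d) {u : ℕ → Y} {r : ℕ → ℝ}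
    (hr0 : ∀ n, 0 ≤ r n) (hr : Tendsto r atTop (𝓝 0))
    (hu : ∀ n, d (u n) (u (n + 1)) + r (n + 1) ≤ r n) :
    ∃ x, Tendsto (fun n => d x (u n)) atTop (𝓝 0) ∧ ∀ n, d (u n) x ≤ r n := by
  have hcauchy : ∀ ε : ℝ, 0 < ε → ∃ N, ∀ m n, N ≤ m → m ≤ n → d (u m) (u n) < ε := by
    intro ε hε
    obtain ⟨N, hN⟩ := eventually_atTop.1 (hr.eventually (gt_mem_nhds hε))
    exact ⟨N, fun m n hm hmn => by linarith [hd.dist_add_le_of_nested hu hmn, hr0 n, hN m hm]⟩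
  obtain ⟨x, hx⟩ := hd.2.2.2.2 u hcauchy
  have hmax : Tendsto (fun n => max (d x (u n)) (d (u n) x)) atTop (𝓝 0) := by
    refine Metric.tendsto_atTop.2 fun ε hε => (hx ε hε).imp fun N hN n hn => ?_
    rw [Real.dist_eq, sub_zero, abs_of_nonneg (le_max_of_le_left (hd.nonneg _ _))]
    exact hN n hn
  refine ⟨x, squeeze_zero (fun n => hd.nonneg _ _) (fun n => le_max_left _ _) hmax, fun m => ?_⟩
  have hback : Tendsto (fun n => r m + d (u n) x) atTop (𝓝 (r m + 0)) :=
    tendsto_const_nhds.add (squeeze_zero (fun n => hd.nonneg _ _) (fun n => le_max_right _ _) hmax)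
  refine add_zero (r m) ▸ ge_of_tendsto hback (eventually_atTop.2 ⟨m, fun n hmn => ?_⟩)
  linarith [hd.triangle (u m) (u n) x, hd.dist_add_le_of_nested hu hmn, hr0 n]

theorem exists_continuous_injective_of_scheme (hd : IsCompleteQuasiMetric d) {P : Type*}
    (c : P → Y) (r : P → ℝ) (child : P → Bool → P) (hr : ∀ p, 0 ≤ r p)
    (hnest : ∀ p i, d (c p) (c (child p i)) + r (child p i) ≤ r p)
    (hhalf : ∀ p i, r (child p i) ≤ r p / 2)
    (hdisj : ∀ p, Pairwise (Disjoint on (fun i => {y | d (c (child p i)) y ≤ r (child p i)})))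
    (root : P) : ∃ φ : (ℕ → Bool) → Y, Continuous φ ∧ Injective φ := by
  set node := branch child root
  have hrad : ∀ σ n, r (node σ n) ≤ r root * (1 / 2) ^ n := by
    intro σ n
    induction n with
    | zero => simp [node, branch]
    | succ n ih =>
      rw [pow_succ, ← mul_assoc]
      linarith [show r (node σ (n + 1)) ≤ r (node σ n) / 2 from hhalf _ _]
  have hlim : ∀ σ, Tendsto (fun n => r (node σ n)) atTop (𝓝 0) := fun σ =>
    squeeze_zero (fun n => hr _) (hrad σ) <| by
      simpa using tendsto_const_nhds.mul
        (tendsto_pow_atTop_nhds_zero_of_lt_one (by norm_num : (0 : ℝ) ≤ 1 / 2) (by norm_num))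
  choose φ hφ hφr using fun σ =>
    hd.exists_limit_of_nested (u := fun n => c (node σ n)) (fun n => hr (node σ n)) (hlim σ)
      fun n => hnest (node σ n) (σ n)
  refine ⟨φ, continuous_iff_continuousAt.2 fun σ => ?_, fun σ τ hστ => ?_⟩
  · refine (hd.nhds_basis_ball (φ σ)).tendsto_right_iff.2 fun ε hε => ?_
    obtain ⟨n, hn₁, hn₂⟩ := ((hφ σ).eventually (gt_mem_nhds (half_pos hε))).and
      ((hlim σ).eventually (gt_mem_nhds (half_pos hε))) |>.exists
    filter_upwards [(isOpen_cylinder _ σ n).mem_nhds (self_mem_cylinder σ n)] with τ hτ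
    have hnode : node τ n = node σ n := branch_eq_of_mem_cylinder child root hτ
    have hτn : d (c (node σ n)) (φ τ) ≤ r (node σ n) := hnode ▸ hφr τ n
    linarith [hd.triangle (φ σ) (c (node σ n)) (φ τ)]
  · by_contra hne
    set n := firstDiff τ σ
    have hnode : node τ n = node σ n :=
      branch_eq_of_mem_cylinder child root (mem_cylinder_firstDiff τ σ)
    have hσ : d (c (child (node σ n) (σ n))) (φ σ) ≤ r (child (node σ n) (σ n)) := hφr σ (n + 1)
    have hτ : d (c (child (node σ n) (τ n))) (φ σ) ≤ r (child (node σ n) (τ n)) := by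
      rw [hστ, ← hnode]
      exact hφr τ (n + 1)
    exact disjoint_left.1 (hdisj (node σ n) (apply_firstDiff_ne (Ne.symm hne)).symm) hσ hτ

theorem exists_split_of_perfect [T2Space Y] (hd : IsCompleteQuasiMetric d) {D : Set Y}
    (hD : Perfect D) {x : Y} (hx : x ∈ D) {r : ℝ} (hr : 0 < r) :
    ∃ y : Bool → Y, ∃ s > 0, (∀ i, y i ∈ D ∧ d x (y i) + s ≤ r) ∧ s ≤ r / 2 ∧
      Pairwise (Disjoint on (fun i => {z | d (y i) z ≤ s})) := by
  obtain ⟨b, ⟨hxb : d x b < r / 2, hbD⟩, hbx⟩ :=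
    preperfect_iff_nhds.1 hD.acc x hx _ ((hd.nhds_basis_ball x).mem_of_mem (half_pos hr))
  obtain ⟨s, hs, hdisj⟩ := hd.exists_disjoint_closedBall hbx
  set t := min s (r / 2)
  have hball : ∀ a, {z | d a z ≤ t} ⊆ {z | d a z ≤ s} :=
    fun a z (hz : d a z ≤ t) => show d a z ≤ s from hz.trans (min_le_left _ _)
  refine ⟨fun i => cond i b x, t, lt_min hs (half_pos hr), fun i => ?_, min_le_right _ _, ?_⟩
  · cases i
    · exact ⟨hx, show d x x + t ≤ r by linarith [hd.dist_self x, min_le_right s (r / 2)]⟩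
    · exact ⟨hbD, show d x b + t ≤ r by linarith [min_le_right s (r / 2)]⟩
  · have hcond : (fun i => {z | d (cond i b x) z ≤ t}) =
        fun i => cond i {z | d b z ≤ t} {z | d x z ≤ t} := funext (Bool.rec rfl rfl)
    rw [hcond, pairwise_disjoint_on_bool]
    exact hdisj.mono (hball b) (hball x)

theorem exists_continuous_injective_of_perfect [T2Space Y] (hd : IsCompleteQuasiMetric d)
    {D : Set Y} (hD : Perfect D) (hne : D.Nonempty) :
    ∃ φ : (ℕ → Bool) → Y, Continuous φ ∧ Injective φ := by
  choose y s hs hy hsr hdisj using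
    fun p : {p : Y × ℝ // p.1 ∈ D ∧ 0 < p.2} => hd.exists_split_of_perfect hD p.2.1 p.2.2
  obtain ⟨x, hx⟩ := hne
  exact hd.exists_continuous_injective_of_scheme (fun p => p.1.1) (fun p => p.1.2)
    (fun p i => ⟨(y p i, s p), (hy p i).1, hs p⟩) (fun p => p.2.2.le) (fun p i => (hy p i).2)
    (fun p _ => hsr p) hdisj ⟨(x, 1), hx, one_pos⟩

end IsCompleteQuasiMetric

/-- The Cantor space embeds topologically into every uncountable Hausdorff
quasi-Polish space. -/
theorem cantor_embeds_into_uncountable_hausdorff_quasiPolish {Y : Type*}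
    [TopologicalSpace Y] [T2Space Y] (hqp : IsQuasiPolish Y) (hunc : ¬ Countable Y) :
    ∃ φ : (ℕ → Bool) → Y, Topology.IsEmbedding φ := by
  obtain ⟨_, -, d, hd⟩ := hqp
  obtain ⟨V, D, hV, hD, huniv⟩ :=
    exists_countable_union_perfect_of_isClosed (isClosed_univ (X := Y))
  have hne : D.Nonempty := by
    refine nonempty_iff_ne_empty.2 fun hD => hunc ?_
    rw [← countable_univ_iff, huniv, hD, union_empty]
    exact hV
  obtain ⟨φ, hφ, hinj⟩ := hd.exists_continuous_injective_of_perfect hD hne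
  exact ⟨φ, (hφ.isClosedEmbedding hinj).isEmbedding⟩
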